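/- Let B be an ideal of a finite-dimensional dialgebra A, and let U be a subalgebra of A minimal with respect to the property A = B + U. Then B ∩ U ⊆ φ(U). -/

import Mathlib

/-!  Framework: dialgebras and Poisson algebras as bilinear structures on a module. -/

variable {F P : Type*} [Field F] [AddCommGroup P] [Module F P]

/-- A dialgebra: a vector space with two bilinear multiplications. -/
structure Dialgebra (F P : Type*) [Field F] [AddCommGroup P] [Module F P] where
  mul : P →ₗ[F] P →ₗ[F] P
  bracket : P →ₗ[F] P →ₗ[F] P

namespace Dialgebra

variable (D : Dialgebra F P)

/-- Span of the set of products `a·b`, `a ∈ A`, `b ∈ B`. -/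
def pmul (A B : Submodule F P) : Submodule F P :=
  Submodule.span F (Set.image2 (fun a b => D.mul a b) (A : Set P) (B : Set P))

/-- Span of the set of brackets `[a,b]`, `a ∈ A`, `b ∈ B`. -/
def pbra (A B : Submodule F P) : Submodule F P :=
  Submodule.span F (Set.image2 (fun a b => D.bracket a b) (A : Set P) (B : Set P))

/-- `A·B + [A,B]`. -/
def psq (A B : Submodule F P) : Submodule F P := D.pmul A B ⊔ D.pbra A B

/-- A subalgebra: a subspace closed under both products. -/
def IsSubalgebra (A : Submodule F P) : Prop := D.psq A A ≤ A

/-- An ideal of the dialgebra. -/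
def IsIdeal (A : Submodule F P) : Prop :=
  D.pmul A ⊤ ≤ A ∧ D.pmul ⊤ A ≤ A ∧ D.pbra A ⊤ ≤ A ∧ D.pbra ⊤ A ≤ A

/-- `A` is an ideal of the subalgebra `U`. -/
def IsIdealIn (A U : Submodule F P) : Prop :=
  A ≤ U ∧ D.pmul A U ≤ A ∧ D.pmul U A ≤ A ∧ D.pbra A U ≤ A ∧ D.pbra U A ≤ A

/-- Lower central series of `B`: `B^1 = B`, `B^{n+1} = B^n·B + [B^n,B]`. -/
def lcs (B : Submodule F P) : ℕ → Submodule F P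
  | 0 => B
  | n + 1 => D.psq (lcs B n) B

/-- `B` is nilpotent as a dialgebra. -/
def IsNilpotentSub (B : Submodule F P) : Prop := ∃ n, D.lcs B n = ⊥

/-- Derived series of `B`. -/
def ders (B : Submodule F P) : ℕ → Submodule F P
  | 0 => B
  | n + 1 => D.psq (ders B n) (ders B n)

/-- `B` is solvable as a dialgebra. -/
def IsSolvableSub (B : Submodule F P) : Prop := ∃ n, D.ders B n = ⊥

/-- Associative powers: `apow B n = B_A^{n+1}`, i.e. `apow B 0 = B_A^1 = B`. -/
def apow (B : Submodule F P) : ℕ → Submodule F P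
  | 0 => B
  | n + 1 => D.pmul (apow B n) B

/-- Lie powers: `lpow B n = B_L^{n+1}`. -/
def lpow (B : Submodule F P) : ℕ → Submodule F P
  | 0 => B
  | n + 1 => D.pbra (lpow B n) B

/-- Associative nilpotency of `B`. -/
def AssocNilpotent (B : Submodule F P) : Prop := ∃ n, D.apow B n = ⊥

/-- Lie nilpotency of `B`. -/
def LieNilpotent (B : Submodule F P) : Prop := ∃ n, D.lpow B n = ⊥

/-- `mulPows B X n = X·B_A^n` (with the convention that it is `X` for `n = 0`). -/
def mulPows (B X : Submodule F P) : ℕ → Submodule F P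
  | 0 => X
  | n + 1 => D.pmul (mulPows B X n) B

/-- `M` is a maximal (proper) subalgebra of the subalgebra `U`. -/
def IsMaximalSubalgebraIn (U M : Submodule F P) : Prop :=
  D.IsSubalgebra M ∧ M < U ∧ ∀ K, D.IsSubalgebra K → M ≤ K → K ≤ U → K = M ∨ K = U

/-- Frattini subalgebra of the subalgebra `U`: intersection of its maximal subalgebras. -/
def frattiniIn (U : Submodule F P) : Submodule F P :=
  U ⊓ sInf {M | D.IsMaximalSubalgebraIn U M}

/-- Frattini ideal of the subalgebra `U`: largest ideal of `U` inside `frattiniIn U`. -/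
def phiIn (U : Submodule F P) : Submodule F P :=
  sSup {I | D.IsIdealIn I U ∧ I ≤ D.frattiniIn U}

/-- Frattini subalgebra of the dialgebra. -/
def frattini : Submodule F P := D.frattiniIn ⊤

/-- Frattini ideal of the dialgebra. -/
def phi : Submodule F P := sSup {I | D.IsIdeal I ∧ I ≤ D.frattini}

/-- Minimal ideal. -/
def IsMinimalIdeal (A : Submodule F P) : Prop :=
  D.IsIdeal A ∧ A ≠ ⊥ ∧ ∀ I, D.IsIdeal I → I ≤ A → I = ⊥ ∨ I = A

/-- Zero (trivial-multiplication) subspace. -/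
def IsZeroAlg (A : Submodule F P) : Prop := D.pmul A A = ⊥ ∧ D.pbra A A = ⊥

/-- Zero socle: sum of the minimal zero ideals. -/
def zsoc : Submodule F P := sSup {A | D.IsMinimalIdeal A ∧ D.IsZeroAlg A}

/-- Socle: sum of the minimal ideals. -/
def soc : Submodule F P := sSup {A | D.IsMinimalIdeal A}

/-- Annihilator of `B` in the algebra. -/
def annih (B : Submodule F P) : Submodule F P where
  carrier := {x | ∀ b ∈ B, D.mul x b = 0 ∧ D.bracket x b = 0}
  add_mem' := by
    intro x y hx hy b hb
    have h1 := hx b hb; have h2 := hy b hb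
    constructor <;> simp [map_add, LinearMap.add_apply, h1.1, h1.2, h2.1, h2.2]
  zero_mem' := by intro b hb; simp
  smul_mem' := by
    intro c x hx b hb
    have h := hx b hb
    constructor <;> simp [map_smul, LinearMap.smul_apply, h.1, h.2]

/-- `R` is the solvable radical: the largest solvable ideal. -/
def IsRadical (R : Submodule F P) : Prop :=
  D.IsIdeal R ∧ D.IsSolvableSub R ∧ ∀ I, D.IsIdeal I → D.IsSolvableSub I → I ≤ R

/-- `N` is the nilradical: the largest nilpotent ideal. -/
def IsNilradical (N : Submodule F P) : Prop :=
  D.IsIdeal N ∧ D.IsNilpotentSub N ∧ ∀ I, D.IsIdeal I → D.IsNilpotentSub I → I ≤ N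

end Dialgebra

/-- A Poisson algebra: commutative associative product and Lie bracket linked by the Leibniz rule. -/
structure PoissonAlgebra (F P : Type*) [Field F] [AddCommGroup P] [Module F P]
    extends Dialgebra F P where
  mul_comm : ∀ x y, mul x y = mul y x
  mul_assoc : ∀ x y z, mul (mul x y) z = mul x (mul y z)
  lie_self : ∀ x, bracket x x = 0
  leibniz_lie : ∀ x y z, bracket x (bracket y z) = bracket (bracket x y) z + bracket y (bracket x z)
  leibniz : ∀ x y z, bracket (mul x y) z = mul (bracket x z) y + mul x (bracket y z)
/-!
If `B ⊓ U` were not inside a maximal subalgebra `M` of `U`, then, being an ideal of `U`, it would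
give the subalgebra `M + (B ⊓ U) = U`. Then `A = B + U = B + M`, and minimality of `U` forces
`M = U`, contradicting `M < U`.
-/

namespace Dialgebra

variable (D : Dialgebra F P)

lemma pmul_eq_map₂ (A B : Submodule F P) : D.pmul A B = Submodule.map₂ D.mul A B :=
  (Submodule.map₂_eq_span_image2 _ _ _).symm

lemma pbra_eq_map₂ (A B : Submodule F P) : D.pbra A B = Submodule.map₂ D.bracket A B :=
  (Submodule.map₂_eq_span_image2 _ _ _).symm

variable {D}

lemma psq_mono {A₁ A₂ B₁ B₂ : Submodule F P} (hA : A₁ ≤ A₂) (hB : B₁ ≤ B₂) :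
    D.psq A₁ B₁ ≤ D.psq A₂ B₂ := by
  simp only [psq, pmul_eq_map₂, pbra_eq_map₂]
  exact sup_le_sup (Submodule.map₂_le_map₂ hA hB) (Submodule.map₂_le_map₂ hA hB)

lemma psq_sup_left (A₁ A₂ B : Submodule F P) :
    D.psq (A₁ ⊔ A₂) B = D.psq A₁ B ⊔ D.psq A₂ B := by
  simp only [psq, pmul_eq_map₂, pbra_eq_map₂, Submodule.map₂_sup_left]
  exact sup_sup_sup_comm _ _ _ _

lemma psq_sup_right (A B₁ B₂ : Submodule F P) :
    D.psq A (B₁ ⊔ B₂) = D.psq A B₁ ⊔ D.psq A B₂ := by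
  simp only [psq, pmul_eq_map₂, pbra_eq_map₂, Submodule.map₂_sup_right]
  exact sup_sup_sup_comm _ _ _ _

lemma IsIdealIn.psq_left_le {I U : Submodule F P} (hI : D.IsIdealIn I U) : D.psq I U ≤ I :=
  sup_le hI.2.1 hI.2.2.2.1

lemma IsIdealIn.psq_right_le {I U : Submodule F P} (hI : D.IsIdealIn I U) : D.psq U I ≤ I :=
  sup_le hI.2.2.1 hI.2.2.2.2

lemma IsIdeal.isIdealIn_inf {B U : Submodule F P} (hB : D.IsIdeal B) (hU : D.IsSubalgebra U) :
    D.IsIdealIn (B ⊓ U) U := by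
  have closed {f : P →ₗ[F] P →ₗ[F] P} (hl : Submodule.map₂ f B ⊤ ≤ B)
      (hr : Submodule.map₂ f ⊤ B ≤ B) (hU : Submodule.map₂ f U U ≤ U) :
      Submodule.map₂ f (B ⊓ U) U ≤ B ⊓ U ∧ Submodule.map₂ f U (B ⊓ U) ≤ B ⊓ U :=
    ⟨le_inf ((Submodule.map₂_le_map₂ inf_le_left le_top).trans hl)
        ((Submodule.map₂_le_map₂_left inf_le_right).trans hU),
      le_inf ((Submodule.map₂_le_map₂ le_top inf_le_left).trans hr)
        ((Submodule.map₂_le_map₂_right inf_le_right).trans hU)⟩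
  rw [IsSubalgebra, psq, sup_le_iff] at hU
  simp only [IsIdealIn, IsIdeal, pmul_eq_map₂, pbra_eq_map₂] at hB hU ⊢
  obtain ⟨hm₁, hm₂⟩ := closed hB.1 hB.2.1 hU.1
  obtain ⟨hb₁, hb₂⟩ := closed hB.2.2.1 hB.2.2.2 hU.2
  exact ⟨inf_le_right, hm₁, hm₂, hb₁, hb₂⟩

lemma IsSubalgebra.sup_of_isIdealIn {M I U : Submodule F P} (hM : D.IsSubalgebra M)
    (hMU : M ≤ U) (hI : D.IsIdealIn I U) : D.IsSubalgebra (M ⊔ I) := by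
  have hII : D.psq I I ≤ I := (psq_mono le_rfl hI.1).trans hI.psq_left_le
  have hMI : D.psq M I ≤ I := (psq_mono hMU le_rfl).trans hI.psq_right_le
  have hIM : D.psq I M ≤ I := (psq_mono le_rfl hMU).trans hI.psq_left_le
  rw [IsSubalgebra, psq_sup_left, psq_sup_right, psq_sup_right]
  exact sup_le (sup_le (hM.trans le_sup_left) (hMI.trans le_sup_right))
    (sup_le (hIM.trans le_sup_right) (hII.trans le_sup_right))

lemma IsMaximalSubalgebraIn.sup_eq_of_isIdealIn {U M I : Submodule F P}
    (hM : D.IsMaximalSubalgebraIn U M) (hI : D.IsIdealIn I U) (hIM : ¬ I ≤ M) : M ⊔ I = U := by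
  obtain ⟨hMsub, hMU, hmax⟩ := hM
  refine (hmax _ (hMsub.sup_of_isIdealIn hMU.le hI) le_sup_left (sup_le hMU.le hI.1)).resolve_left
    fun h => hIM (h ▸ le_sup_right)

lemma le_phiIn_of_forall_le {I U : Submodule F P} (hI : D.IsIdealIn I U)
    (h : ∀ M, D.IsMaximalSubalgebraIn U M → I ≤ M) : I ≤ D.phiIn U :=
  le_sSup ⟨hI, le_inf hI.1 (le_sInf h)⟩

end Dialgebra

theorem inf_le_phi_of_minimal_supplement_general {F P : Type*} [Field F] [AddCommGroup P] [Module F P]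
    (D : Dialgebra F P) (B U : Submodule F P)
    (hB : D.IsIdeal B) (hU : D.IsSubalgebra U) (hBU : B ⊔ U = ⊤)
    (hmin : ∀ U', D.IsSubalgebra U' → U' ≤ U → B ⊔ U' = ⊤ → U' = U) :
    B ⊓ U ≤ D.phiIn U := by
  have hI := hB.isIdealIn_inf hU
  refine Dialgebra.le_phiIn_of_forall_le hI fun M hM => ?_
  by_contra hIM
  have hMI : M ⊔ B ⊓ U = U := hM.sup_eq_of_isIdealIn hI hIM
  have hBM : B ⊔ M = ⊤ := top_unique <| calc
    ⊤ = B ⊔ (M ⊔ B ⊓ U) := by rw [hMI, hBU]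
    _ ≤ B ⊔ M := sup_le le_sup_left (sup_le le_sup_right (inf_le_left.trans le_sup_left))
  exact hM.2.1.ne (hmin M hM.1 hM.2.1.le hBM)

/-- If `U` is minimal among subalgebras with `A = B + U` (`B` an ideal), then
`B ∩ U ⊆ φ(U)`. -/
theorem inf_le_phi_of_minimal_supplement {F P : Type*} [Field F] [AddCommGroup P] [Module F P]
    [FiniteDimensional F P] (D : Dialgebra F P) (B U : Submodule F P)
    (hB : D.IsIdeal B) (hU : D.IsSubalgebra U) (hBU : B ⊔ U = ⊤)
    (hmin : ∀ U', D.IsSubalgebra U' → U' ≤ U → B ⊔ U' = ⊤ → U' = U) :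
    B ⊓ U ≤ D.phiIn U :=
  inf_le_phi_of_minimal_supplement_general D B U hB hU hBU hmin
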